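/- arXiv:2311.15048 — 4 statements merged into one kernel-verified Lean document; each statement's English description precedes it below -/
import Mathlib

section
/- Let C ⊆ [0,1) be compact with λ(C) > 1 - ε, and let f : [0,1) → {a,b} be continuous on C. Suppose n ∈ ℕ satisfies that the fraction of dyadic intervals [k/2^n, (k+1)/2^n] contained in C exceeds 1 - 2ε. Define g : [0,1) → {a,b} by: on each [k/2^n, (k+ε)/2^n), g is arbitrary; on each [(k+ε)/2^n, (k+1)/2^n), g is the majority value of f on [k/2^n, (k+ε)/2^n). Then λ({t ∈ [0,1) : f(t) = g(t)}) ≥ (1 - 2ε)(1 - ε). -/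
open MeasureTheory Set
open scoped Classical

/-- The majority value (in the two-point set `Bool`) of `f` on a set `I`. -/
noncomputable def majorityValue (f : ℝ → Bool) (I : Set ℝ) : Bool :=
  if volume I / 2 < volume {t ∈ I | f t = true} then true else false

/-- If `C ⊆ [0,1)` is compact with `λ(C) > 1 - ε`, `f` is continuous on `C`,
more than a `(1-2ε)`-fraction of the level-`n` dyadic intervals lie in `C`, and
`g` follows the majority rule (arbitrary on `[k/2^n,(k+ε)/2^n)`, then equal to
the majority value of `f` on that piece throughout `[(k+ε)/2^n,(k+1)/2^n)`),
then `f` and `g` agree on a subset of `[0,1)` of measure at least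
`(1-2ε)(1-ε)`. -/
theorem majority_guess_payoff (ε : ℝ) (hε : 0 < ε) (hε' : ε < 1 / 2)
    (C : Set ℝ) (hC : IsCompact C) (hC1 : C ⊆ Ico (0 : ℝ) 1)
    (hCm : ENNReal.ofReal (1 - ε) < volume C)
    (f : ℝ → Bool) (hf : ContinuousOn f C)
    (n : ℕ)
    (hn : (1 : ℝ) - 2 * ε <
      (((Finset.range (2 ^ n)).filter
          (fun k : ℕ => Icc ((k : ℝ) / 2 ^ n) (((k : ℝ) + 1) / 2 ^ n) ⊆ C)).card : ℝ)
        / 2 ^ n)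
    (g : ℝ → Bool)
    (hg : ∀ k : ℕ, k < 2 ^ n →
      ∀ t ∈ Ico (((k : ℝ) + ε) / 2 ^ n) (((k : ℝ) + 1) / 2 ^ n),
        g t = majorityValue f (Ico ((k : ℝ) / 2 ^ n) (((k : ℝ) + ε) / 2 ^ n))) :
    ENNReal.ofReal ((1 - 2 * ε) * (1 - ε)) ≤
      volume {t ∈ Ico (0 : ℝ) 1 | f t = g t} := by
  have hN : (0:ℝ) < 2 ^ n := by positivity
  set S := (Finset.range (2 ^ n)).filter
      (fun k : ℕ => Icc ((k : ℝ) / 2 ^ n) (((k : ℝ) + 1) / 2 ^ n) ⊆ C) with hSdef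
  have key : ∀ k ∈ S, Ico (((k:ℝ) + ε) / 2 ^ n) (((k:ℝ) + 1) / 2 ^ n)
      ⊆ {t ∈ Ico (0:ℝ) 1 | f t = g t} := by
    intro k hk
    rw [hSdef, Finset.mem_filter, Finset.mem_range] at hk
    obtain ⟨hk2, hsub⟩ := hk
    have hk2' : (k:ℝ) + 1 ≤ 2 ^ n := by
      have : (k:ℝ) + 1 ≤ (2:ℝ) ^ n := by exact_mod_cast Nat.succ_le_of_lt hk2
      simpa using this
    have hconst : ∀ t ∈ Icc ((k:ℝ)/2^n) (((k:ℝ)+1)/2^n), f t = f ((k:ℝ)/2^n) := by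
      intro t ht
      exact isPreconnected_Icc.constant (hf.mono hsub) ht
        ⟨le_refl _, by gcongr <;> linarith⟩
    have hIsub : Ico ((k:ℝ)/2^n) (((k:ℝ)+ε)/2^n) ⊆ Icc ((k:ℝ)/2^n) (((k:ℝ)+1)/2^n) := by
      intro t ht
      refine ⟨ht.1, le_trans ht.2.le ?_⟩
      gcongr
      linarith
    have hvolI : volume (Ico ((k:ℝ)/2^n) (((k:ℝ)+ε)/2^n)) = ENNReal.ofReal (ε / 2 ^ n) := by
      rw [Real.volume_Ico]
      congr 1
      ring
    have hmaj : majorityValue f (Ico ((k:ℝ)/2^n) (((k:ℝ)+ε)/2^n)) = f ((k:ℝ)/2^n) := by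
      unfold majorityValue
      cases hfk : f ((k:ℝ)/2^n) with
      | true =>
        rw [if_pos]
        have heq : {t ∈ Ico ((k:ℝ)/2^n) (((k:ℝ)+ε)/2^n) | f t = true}
            = Ico ((k:ℝ)/2^n) (((k:ℝ)+ε)/2^n) := by
          ext t
          simp only [mem_setOf_eq, mem_Ico]
          exact ⟨fun h => h.1, fun h => ⟨h, by rw [hconst t (hIsub h), hfk]⟩⟩
        rw [heq]
        apply ENNReal.half_lt_self
        · rw [hvolI]
          simp only [ne_eq, ENNReal.ofReal_eq_zero, not_le]
          positivity
        · rw [hvolI]; exact ENNReal.ofReal_ne_top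
      | false =>
        rw [if_neg]
        have heq : {t ∈ Ico ((k:ℝ)/2^n) (((k:ℝ)+ε)/2^n) | f t = true} = (∅ : Set ℝ) := by
          ext t
          simp only [mem_setOf_eq, mem_empty_iff_false, iff_false, not_and]
          intro h
          rw [hconst t (hIsub h), hfk]
          simp
        rw [heq]
        simp
    intro t ht
    have ht' : t ∈ Icc ((k:ℝ)/2^n) (((k:ℝ)+1)/2^n) := by
      constructor
      · refine le_trans ?_ ht.1
        gcongr
        linarith
      · exact ht.2.le
    refine ⟨⟨?_, ?_⟩, ?_⟩
    · refine le_trans ?_ ht.1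
      positivity
    · calc t < ((k:ℝ)+1)/2^n := ht.2
        _ ≤ 1 := by rw [div_le_one hN]; exact hk2'
    · rw [hg k hk2 t ht, hmaj, hconst t ht']
  have hdisj : (S : Set ℕ).PairwiseDisjoint
      (fun k : ℕ => Ico (((k:ℝ)+ε)/2^n) (((k:ℝ)+1)/2^n)) := by
    intro i hi j hj hij
    rw [Function.onFun, Set.Ico_disjoint_Ico]
    rcases lt_or_gt_of_ne hij with h | h
    · have : ((i:ℝ)+1) ≤ ((j:ℝ)+ε) := by
        have : (i:ℝ) + 1 ≤ (j:ℝ) := by exact_mod_cast h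
        linarith
      calc min (((i:ℝ)+1)/2^n) (((j:ℝ)+1)/2^n) ≤ ((i:ℝ)+1)/2^n := min_le_left _ _
        _ ≤ ((j:ℝ)+ε)/2^n := by gcongr
        _ ≤ max (((i:ℝ)+ε)/2^n) (((j:ℝ)+ε)/2^n) := le_max_right _ _
    · have : ((j:ℝ)+1) ≤ ((i:ℝ)+ε) := by
        have : (j:ℝ) + 1 ≤ (i:ℝ) := by exact_mod_cast h
        linarith
      calc min (((i:ℝ)+1)/2^n) (((j:ℝ)+1)/2^n) ≤ ((j:ℝ)+1)/2^n := min_le_right _ _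
        _ ≤ ((i:ℝ)+ε)/2^n := by gcongr
        _ ≤ max (((i:ℝ)+ε)/2^n) (((j:ℝ)+ε)/2^n) := le_max_left _ _
  calc ENNReal.ofReal ((1 - 2 * ε) * (1 - ε))
      ≤ ∑ k ∈ S, volume (Ico (((k:ℝ)+ε)/2^n) (((k:ℝ)+1)/2^n)) := by
        have hvol : ∀ k ∈ S, volume (Ico (((k:ℝ)+ε)/2^n) (((k:ℝ)+1)/2^n))
            = ENNReal.ofReal ((1-ε)/2^n) := by
          intro k _
          rw [Real.volume_Ico]
          congr 1
          ring
        rw [Finset.sum_congr rfl hvol, Finset.sum_const, nsmul_eq_mul]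
        rw [← ENNReal.ofReal_natCast, ← ENNReal.ofReal_mul (by positivity)]
        apply ENNReal.ofReal_le_ofReal
        have h1ε : (0:ℝ) ≤ 1 - ε := by linarith
        have : (1 - 2*ε) * (1 - ε) ≤ ((S.card : ℝ) / 2^n) * (1 - ε) := by
          apply mul_le_mul_of_nonneg_right hn.le h1ε
        calc (1 - 2*ε) * (1 - ε) ≤ ((S.card : ℝ) / 2^n) * (1 - ε) := this
          _ = (S.card : ℝ) * ((1-ε)/2^n) := by ring
    _ = volume (⋃ k ∈ S, Ico (((k:ℝ)+ε)/2^n) (((k:ℝ)+1)/2^n)) :=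
        (measure_biUnion_finset hdisj (fun k _ => measurableSet_Ico)).symm
    _ ≤ volume {t ∈ Ico (0:ℝ) 1 | f t = g t} := measure_mono (Set.iUnion₂_subset key)
end

section
/- (Guessing a random function.) Let (Ω, F, P) be a probability space, f : Ω × [0,1] → {a,b} jointly measurable, and ε > 0. Then there exists n* ∈ ℕ and a map α assigning to each ω a function g_ω : [0,1) → {a,b} such that: (i) on each interval [k/2^{n*}, (k+ε)/2^{n*}), g_ω depends only on the restriction of f(ω,·) to [0, k/2^{n*}) (non-anticipativity with delay); and (ii) P({ω : λ({t ∈ [0,1) : f(ω,t) = g_ω(t)}) ≥ 1 - 2ε}) ≥ 1 - ε. -/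
/-!
Guess `f (ω, ·)` by its own delayed copy `t ↦ f (ω, t - δ)`: with `δ = max ε (1 - ε) / 2 ^ n`
this guess only looks at values of `f (ω, ·)` that the grid already reveals. Since translation
is continuous in measure, the set of `t ∈ [0, 1)` where the copy is wrong has Lebesgue measure
tending to `0` as `δ → 0`, for every `ω`. By dominated convergence its expectation tends to `0`
as well, and Markov's inequality turns this into the required bound in probability.
-/

open MeasureTheory Set Filter Topology
open scoped ENNReal symmDiff

theorem tendsto_measure_symmDiff_preimage_sub_right {G : Type*} [TopologicalSpace G] [AddGroup G]
    [IsTopologicalAddGroup G] [MeasurableSpace G] [BorelSpace G] {μ : Measure G}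
    [μ.InnerRegularCompactLTTop] [IsLocallyFiniteMeasure μ] [μ.IsAddRightInvariant]
    {s : Set G} (hs : NullMeasurableSet s μ) (hμs : μ s ≠ ∞) :
    Tendsto (fun c => μ (((· - c) ⁻¹' s) ∆ s)) (𝓝 0) (𝓝 0) := by
  let shift : G → C(G, G) := fun c => ⟨(· - c), by fun_prop⟩
  have hshift : Continuous shift :=
    ContinuousMap.continuous_of_continuous_uncurry _ (continuous_snd.sub continuous_fst)
  simpa [shift] using tendsto_measure_symmDiff_preimage_nhds_zero (hshift.tendsto 0)
    (.of_forall fun c => measurePreserving_sub_right μ c) (measurePreserving_sub_right μ 0) hs hμs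

noncomputable def delay {β : Type*} (b : β) (δ : ℝ) (x : ℝ → β) (t : ℝ) : β :=
  if t < δ then b else x (t - δ)

section Delay

variable {β : Type*} (b : β) (δ : ℝ)

theorem delay_eq_of_eqOn {x y : ℝ → β} {s t : ℝ} (h : EqOn x y (Ico 0 s)) (ht : t < s + δ) :
    delay b δ x t = delay b δ y t := by
  unfold delay
  split_ifs with htδ
  · rfl
  · exact h ⟨by linarith [not_lt.1 htδ], by linarith⟩

theorem Measurable.delay [MeasurableSpace β] {Ω : Type*} [MeasurableSpace Ω] {f : Ω × ℝ → β}
    (hf : Measurable f) : Measurable fun p : Ω × ℝ => delay b δ (fun t => f (p.1, t)) p.2 :=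
  Measurable.ite (measurable_snd measurableSet_Iio) measurable_const
    (hf.comp (measurable_fst.prodMk (measurable_snd.sub measurable_const)))

end Delay

theorem one_sub_volume_mismatch_le {β : Type*} (x y : ℝ → β) :
    1 - volume {t ∈ Ico (0 : ℝ) 1 | x t ≠ y t} ≤ volume {t ∈ Ico (0 : ℝ) 1 | x t = y t} := by
  calc 1 - volume {t ∈ Ico (0 : ℝ) 1 | x t ≠ y t}
      = volume (Ico (0 : ℝ) 1) - volume {t ∈ Ico (0 : ℝ) 1 | x t ≠ y t} := by simp
    _ ≤ volume (Ico (0 : ℝ) 1 \ {t ∈ Ico (0 : ℝ) 1 | x t ≠ y t}) := le_measure_sdiff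
    _ ≤ volume {t ∈ Ico (0 : ℝ) 1 | x t = y t} :=
      measure_mono fun t ⟨ht, hne⟩ => ⟨ht, not_not.1 fun h => hne ⟨ht, h⟩⟩

theorem mismatch_delay_subset (x : ℝ → Bool) (b : Bool) {δ : ℝ} (hδ : 0 ≤ δ) :
    {t ∈ Ico (0 : ℝ) 1 | x t ≠ delay b δ x t} ⊆
      Ico 0 δ ∪
        ((· - δ) ⁻¹' {t ∈ Ico (0 : ℝ) 1 | x t = true}) ∆ {t ∈ Ico (0 : ℝ) 1 | x t = true} := by
  rintro t ⟨⟨ht0, ht1⟩, hne⟩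
  by_cases htδ : t < δ
  · exact Or.inl ⟨ht0, htδ⟩
  · right
    have hshift : t - δ ∈ Ico (0 : ℝ) 1 := ⟨by linarith [not_lt.1 htδ], by linarith⟩
    rw [delay, if_neg htδ] at hne
    cases hxt : x t <;> cases hxs : x (t - δ) <;> simp_all [mem_symmDiff]

theorem tendsto_volume_mismatch_delay {x : ℝ → Bool} (hx : Measurable x) (b : Bool) :
    Tendsto (fun δ => volume {t ∈ Ico (0 : ℝ) 1 | x t ≠ delay b δ x t}) (𝓝[≥] 0) (𝓝 0) := by
  set A := {t ∈ Ico (0 : ℝ) 1 | x t = true}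
  have hA : MeasurableSet A := measurableSet_Ico.inter (hx (measurableSet_singleton true))
  have hAfin : volume A ≠ ∞ := measure_ne_top_of_subset (fun _ ht => ht.1) (by simp)
  have hbound : Tendsto (fun δ => volume (Ico 0 δ) + volume (((· - δ) ⁻¹' A) ∆ A))
      (𝓝[≥] 0) (𝓝 0) := by
    have hIco : Tendsto (fun δ : ℝ => volume (Ico 0 δ)) (𝓝 0) (𝓝 0) := by
      simpa using (ENNReal.continuous_ofReal.tendsto 0)
    simpa using (hIco.add
      (tendsto_measure_symmDiff_preimage_sub_right hA.nullMeasurableSet hAfin)).mono_left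
        nhdsWithin_le_nhds
  refine tendsto_of_tendsto_of_tendsto_of_le_of_le' tendsto_const_nhds hbound
    (.of_forall fun _ => zero_le) ?_
  filter_upwards [self_mem_nhdsWithin] with δ hδ
  exact (measure_mono (mismatch_delay_subset x b hδ)).trans (measure_union_le _ _)

section Random

variable {Ω β : Type*} [MeasurableSpace Ω] {f : Ω × ℝ → Bool}

theorem measurable_volume_mismatch_delay (hf : Measurable f) (b : Bool) (δ : ℝ) :
    Measurable fun ω =>
      volume {t ∈ Ico (0 : ℝ) 1 | f (ω, t) ≠ delay b δ (fun s => f (ω, s)) t} :=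
  measurable_measure_prodMk_left <|
    (measurable_snd measurableSet_Ico).inter (measurableSet_eq_fun hf (hf.delay b δ)).compl

theorem tendsto_measure_volume_mismatch_delay_ge (P : Measure Ω) [IsFiniteMeasure P]
    (hf : Measurable f) (b : Bool) {c : ℝ≥0∞} (hc0 : c ≠ 0) (hc : c ≠ ∞) :
    Tendsto (fun δ => P {ω | c ≤ volume {t ∈ Ico (0 : ℝ) 1 |
      f (ω, t) ≠ delay b δ (fun s => f (ω, s)) t}}) (𝓝[≥] 0) (𝓝 0) := by
  have hint : Tendsto (fun δ => ∫⁻ ω, volume {t ∈ Ico (0 : ℝ) 1 |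
      f (ω, t) ≠ delay b δ (fun s => f (ω, s)) t} ∂P) (𝓝[≥] 0) (𝓝 0) := by
    simpa using tendsto_lintegral_filter_of_dominated_convergence (fun _ => 1)
      (.of_forall fun δ => measurable_volume_mismatch_delay hf b δ)
      (.of_forall fun δ => .of_forall fun ω =>
        measure_mono (μ := volume) (sep_subset _ _) |>.trans_eq (by simp))
      (by simp)
      (.of_forall fun ω => tendsto_volume_mismatch_delay (hf.comp measurable_prodMk_left) b)
  have hmarkov := ENNReal.Tendsto.div_const hint (Or.inr hc0)
  rw [ENNReal.zero_div] at hmarkov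
  exact tendsto_of_tendsto_of_tendsto_of_le_of_le tendsto_const_nhds hmarkov (fun _ => zero_le)
    fun δ => meas_ge_le_lintegral_div
      (measurable_volume_mismatch_delay hf b δ).aemeasurable hc0 hc

theorem one_sub_le_measure_volume_agree {P : Measure Ω} [IsProbabilityMeasure P]
    {x y : Ω → ℝ → β} {c p : ℝ≥0∞}
    (hp : P {ω | c ≤ volume {t ∈ Ico (0 : ℝ) 1 | x ω t ≠ y ω t}} ≤ p) :
    1 - p ≤ P {ω | 1 - c ≤ volume {t ∈ Ico (0 : ℝ) 1 | x ω t = y ω t}} := by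
  calc 1 - p ≤ P univ - P {ω | c ≤ volume {t ∈ Ico (0 : ℝ) 1 | x ω t ≠ y ω t}} := by
        rw [measure_univ]; exact tsub_le_tsub_left hp 1
    _ ≤ P (univ \ {ω | c ≤ volume {t ∈ Ico (0 : ℝ) 1 | x ω t ≠ y ω t}}) := le_measure_sdiff
    _ ≤ _ := measure_mono fun ω ⟨_, hω⟩ =>
        (tsub_le_tsub_left (not_le.1 hω).le 1).trans (one_sub_volume_mismatch_le _ _)

end Random

/-- Guessing a random function: for every jointly measurable
`f : Ω × [0,1] → Bool` and `ε > 0` there are a level `n*` and a guess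
`g : Ω → [0,1) → Bool` such that (i) on each grid interval of the grid
`t_{2k} = k/2^{n*}`, `t_{2k+1} = (k+ε)/2^{n*}` the guess `g ω` depends only on
the restriction of `f (ω, ·)` to the past (non-anticipativity with delay), and
(ii) with probability at least `1 - ε`, `f (ω, ·)` and `g ω` agree on a subset
of `[0,1)` of Lebesgue measure at least `1 - 2ε`. -/
theorem guessing_a_random_function (Ω : Type*) [MeasurableSpace Ω]
    (P : Measure Ω) [IsProbabilityMeasure P]
    (f : Ω × ℝ → Bool) (hf : Measurable f) (ε : ℝ) (hε : 0 < ε) :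
    ∃ (nstar : ℕ) (g : Ω → ℝ → Bool),
      (∀ k : ℕ, k < 2 ^ nstar → ∀ ω ω' : Ω,
        (∀ t ∈ Ico (0 : ℝ) ((k : ℝ) / 2 ^ nstar), f (ω, t) = f (ω', t)) →
        ∀ t ∈ Ico ((k : ℝ) / 2 ^ nstar) (((k : ℝ) + ε) / 2 ^ nstar),
          g ω t = g ω' t) ∧
      (∀ k : ℕ, k < 2 ^ nstar → ∀ ω ω' : Ω,
        (∀ t ∈ Ico (0 : ℝ) (((k : ℝ) + ε) / 2 ^ nstar), f (ω, t) = f (ω', t)) →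
        ∀ t ∈ Ico (((k : ℝ) + ε) / 2 ^ nstar) (((k : ℝ) + 1) / 2 ^ nstar),
          g ω t = g ω' t) ∧
      ENNReal.ofReal (1 - ε) ≤
        P {ω : Ω |
            ENNReal.ofReal (1 - 2 * ε) ≤
              volume {t ∈ Ico (0 : ℝ) 1 | f (ω, t) = g ω t}} := by
  set δ : ℕ → ℝ := fun n => max ε (1 - ε) / 2 ^ n
  have hδ : Tendsto δ atTop (𝓝[≥] 0) := tendsto_nhdsWithin_iff.2
    ⟨tendsto_const_nhds.div_atTop (tendsto_pow_atTop_atTop_of_one_lt one_lt_two),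
      .of_forall fun n => div_nonneg (hε.le.trans (le_max_left _ _)) (by positivity)⟩
  obtain ⟨n, hn⟩ := (((tendsto_measure_volume_mismatch_delay_ge P hf true
    (c := ENNReal.ofReal (2 * ε)) (by simpa using hε) ENNReal.ofReal_ne_top).comp hδ).eventually
      (gt_mem_nhds (ENNReal.ofReal_pos.2 hε))).exists
  -- A delay of `ε / 2 ^ n` serves the first kind of grid interval, `(1 - ε) / 2 ^ n` the second.
  refine ⟨n, fun ω => delay true (δ n) (fun t => f (ω, t)),
    fun k _ ω ω' h t ht => delay_eq_of_eqOn true (δ n) h (ht.2.trans_le ?_),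
    fun k _ ω ω' h t ht => delay_eq_of_eqOn true (δ n) h (ht.2.trans_le ?_), ?_⟩
  · rw [← add_div]
    exact div_le_div_of_nonneg_right (by linarith [le_max_left ε (1 - ε)]) (by positivity)
  · rw [← add_div]
    exact div_le_div_of_nonneg_right (by linarith [le_max_right ε (1 - ε)]) (by positivity)
  · rw [ENNReal.ofReal_sub _ hε.le, ENNReal.ofReal_sub _ (by positivity), ENNReal.ofReal_one]
    exact one_sub_le_measure_volume_agree (x := fun ω t => f (ω, t)) hn.le
end

section
/- The value of the 'guessing a random function' game equals 1: for every probability space (Ω, F, P), every jointly measurable f : Ω × [0,1) → {a,b}, and every δ > 0, the guesser has a non-anticipative response g (measurable in ω, with g on each grid interval depending only on past values of f(ω,·)) with expected payoff E[λ({t ∈ [0,1) : f(ω,t) = g(ω,t)})] ≥ 1 - δ; and trivially the payoff never exceeds 1. -/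
open MeasureTheory Set Filter
open scoped symmDiff Topology ENNReal

/-!
The guesser copies `f` with a delay `h = 1/K`: at time `s ≥ h` it guesses `f (ω, s - h)`, which
is known at the start of the grid interval containing `s`. It loses at most `h` on `[0, h)`, and
on `[h, 1)` it loses where `S_ω = {s ∈ [0,1) | f (ω, s)}` and its translate `S_ω + h` differ.
Translation is continuous in measure on each fibre, so dominated convergence makes the expected
measure of `(S_ω + h) ∆ S_ω` tend to `0` with `h`.
-/

section Translation

variable {G : Type*} [AddGroup G] [TopologicalSpace G] [IsTopologicalAddGroup G]
  [MeasurableSpace G] [BorelSpace G] {μ : Measure G} [μ.IsAddRightInvariant]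
  [μ.InnerRegularCompactLTTop] [IsLocallyFiniteMeasure μ]

theorem tendsto_measure_preimage_sub_symmDiff {s : Set G} (hs : NullMeasurableSet s μ)
    (hμs : μ s ≠ ∞) :
    Tendsto (fun h : G => μ (((fun x => x - h) ⁻¹' s) ∆ s)) (𝓝 0) (𝓝 0) := by
  let shift : G → C(G, G) := fun h => ⟨fun x => x - h, by fun_prop⟩
  have hshift : Continuous shift :=
    ContinuousMap.continuous_of_continuous_uncurry _ (continuous_snd.sub continuous_fst)
  have h0 : shift 0 = ContinuousMap.id G := by ext; simp [shift]
  have hlim : Tendsto shift (𝓝 0) (𝓝 (ContinuousMap.id G)) := h0 ▸ hshift.tendsto 0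
  have key := tendsto_measure_symmDiff_preimage_nhds_zero hlim
    (.of_forall fun h => measurePreserving_sub_right μ h) (MeasurePreserving.id μ) hs hμs
  exact key

variable [FirstCountableTopology G] [SFinite μ] {Ω : Type*} [MeasurableSpace Ω] {P : Measure Ω}

theorem tendsto_prod_measure_preimage_sub_snd_symmDiff {E : Set (Ω × G)} (hE : MeasurableSet E)
    (hPE : P.prod μ E ≠ ∞) :
    Tendsto (fun h : G => P.prod μ (((fun p : Ω × G => (p.1, p.2 - h)) ⁻¹' E) ∆ E))
      (𝓝 0) (𝓝 0) := by
  have hD : ∀ h : G, MeasurableSet (((fun p : Ω × G => (p.1, p.2 - h)) ⁻¹' E) ∆ E) :=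
    fun h => ((measurable_fst.prodMk (measurable_snd.sub_const h)) hE).symmDiff hE
  simp_rw [Measure.prod_apply (hD _)]
  have hslice_fin : ∀ᵐ ω ∂P, μ (Prod.mk ω ⁻¹' E) < ∞ :=
    ae_lt_top (measurable_measure_prodMk_left hE) (by rwa [← Measure.prod_apply hE])
  have hbound : ∀ (h : G) (ω : Ω),
      μ (Prod.mk ω ⁻¹' (((fun p : Ω × G => (p.1, p.2 - h)) ⁻¹' E) ∆ E))
        ≤ 2 * μ (Prod.mk ω ⁻¹' E) := by
    intro h ω
    calc _ ≤ μ ((fun x => x - h) ⁻¹' (Prod.mk ω ⁻¹' E)) + μ (Prod.mk ω ⁻¹' E) :=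
          (measure_mono symmDiff_subset_union).trans (measure_union_le _ _)
      _ = 2 * μ (Prod.mk ω ⁻¹' E) := by
          rw [(measurePreserving_sub_right μ h).measure_preimage
            (measurable_prodMk_left hE).nullMeasurableSet, two_mul]
  simpa using tendsto_lintegral_filter_of_dominated_convergence _
    (.of_forall fun h => measurable_measure_prodMk_left (hD h))
    (.of_forall fun h => .of_forall (hbound h))
    (by rw [lintegral_const_mul _ (measurable_measure_prodMk_left hE), ← Measure.prod_apply hE]
        exact ENNReal.mul_ne_top ENNReal.ofNat_ne_top hPE)
    (hslice_fin.mono fun ω hω => tendsto_measure_preimage_sub_symmDiff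
      (measurable_prodMk_left hE).nullMeasurableSet hω.ne)

end Translation

section DelayedCopy

variable {Ω : Type*} {f : Ω × ℝ → Bool}

noncomputable def delayedCopy (f : Ω × ℝ → Bool) (h : ℝ) (ω : Ω) (s : ℝ) : Bool :=
  if s < h then true else f (ω, s - h)

def trueSet (f : Ω × ℝ → Bool) : Set (Ω × ℝ) := {p | f p = true ∧ p.2 ∈ Ico 0 1}

theorem delayedCopy_congr {h a : ℝ} {ω ω' : Ω}
    (hpast : ∀ s ∈ Ico 0 a, f (ω, s) = f (ω', s)) {s : ℝ} (hs : s < a + h) :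
    delayedCopy f h ω s = delayedCopy f h ω' s := by
  unfold delayedCopy
  split_ifs with hsh
  · rfl
  · exact hpast _ ⟨by linarith [not_lt.mp hsh], by linarith⟩

theorem compl_setOf_eq_delayedCopy_inter_subset {h : ℝ} (hh : 0 ≤ h) :
    {p : Ω × ℝ | f p = delayedCopy f h p.1 p.2}ᶜ ∩ univ ×ˢ Ico 0 1 ⊆
      univ ×ˢ Ico 0 h ∪
        ((fun p : Ω × ℝ => (p.1, p.2 - h)) ⁻¹' trueSet f) ∆ trueSet f := by
  rintro ⟨ω, s⟩ ⟨hne, -, hs0, hs1⟩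
  by_cases hsh : s < h
  · exact Or.inl ⟨mem_univ _, hs0, hsh⟩
  · right
    have hne : f (ω, s) ≠ f (ω, s - h) := by simpa [delayedCopy, hsh] using hne
    have hlag : s - h ∈ Ico (0 : ℝ) 1 := ⟨by linarith [not_lt.mp hsh], by linarith⟩
    cases hfs : f (ω, s) <;> cases hfl : f (ω, s - h) <;>
      simp_all [Set.mem_symmDiff, trueSet]

variable [MeasurableSpace Ω]

theorem measurable_delayedCopy (hf : Measurable f) (h : ℝ) :
    Measurable fun p : Ω × ℝ => delayedCopy f h p.1 p.2 :=
  Measurable.ite (measurable_snd measurableSet_Iio) measurable_const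
    (hf.comp (measurable_fst.prodMk (measurable_snd.sub_const h)))

theorem measurableSet_trueSet (hf : Measurable f) : MeasurableSet (trueSet f) :=
  (hf (measurableSet_singleton true)).inter (measurable_snd measurableSet_Ico)

theorem prod_volume_trueSet_ne_top (P : Measure Ω) [IsFiniteMeasure P] :
    P.prod volume (trueSet f) ≠ ∞ := by
  refine ne_top_of_le_ne_top ?_
    (measure_mono (t := univ ×ˢ Ico 0 1) fun p hp => ⟨trivial, hp.2⟩)
  simp [Measure.prod_prod, Real.volume_Ico, measure_ne_top]

theorem prod_measure_compl_setOf_eq_delayedCopy_le {P : Measure Ω} [SFinite P]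
    (hf : Measurable f) {h : ℝ} (hh : 0 ≤ h) :
    P.prod (volume.restrict (Ico 0 1)) {p : Ω × ℝ | f p = delayedCopy f h p.1 p.2}ᶜ ≤
      P univ * ENNReal.ofReal h +
        P.prod volume (((fun p : Ω × ℝ => (p.1, p.2 - h)) ⁻¹' trueSet f) ∆ trueSet f) := by
  rw [← Measure.restrict_univ (μ := P), Measure.prod_restrict, Measure.restrict_univ,
    Measure.restrict_apply (measurableSet_eq_fun hf (measurable_delayedCopy hf h)).compl]
  calc _ ≤ _ := measure_mono (compl_setOf_eq_delayedCopy_inter_subset hh)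
    _ ≤ _ := measure_union_le _ _
    _ = _ := by rw [Measure.prod_prod, Real.volume_Ico, sub_zero]

end DelayedCopy

theorem ofReal_one_sub_le_of_measure_compl_le {α : Type*} [MeasurableSpace α] {μ : Measure α}
    [IsProbabilityMeasure μ] {s : Set α} (hs : MeasurableSet s) {δ : ℝ} (hδ : 0 ≤ δ)
    (hsc : μ sᶜ ≤ ENNReal.ofReal δ) : ENNReal.ofReal (1 - δ) ≤ μ s := by
  rw [ENNReal.ofReal_sub 1 hδ, ENNReal.ofReal_one]
  calc 1 - ENNReal.ofReal δ ≤ 1 - μ sᶜ := tsub_le_tsub_left hsc 1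
    _ = μ s := by
      rw [prob_compl_eq_one_sub hs, ENNReal.sub_sub_cancel ENNReal.one_ne_top prob_le_one]

/-- The value of the "guessing a random function" game is 1: for every
probability space, every jointly measurable `f : Ω × [0,1) → Bool`, and every
`δ > 0`, the guesser has a measurable non-anticipative response `g` (there is a
finite grid `0 = t 0 < ⋯ < t K = 1` such that on each `[t k, t (k+1))` the
guess `g ω` depends only on the restriction of `f (ω, ·)` to `[0, t k)`) whose
expected payoff `(P ⊗ λ)({(ω,t) : f (ω,t) = g ω t})` is at least `1 - δ`; and
the payoff never exceeds 1. -/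
theorem guessing_game_value_one (Ω : Type*) [MeasurableSpace Ω]
    (P : Measure Ω) [IsProbabilityMeasure P]
    (f : Ω × ℝ → Bool) (hf : Measurable f) (δ : ℝ) (hδ : 0 < δ) :
    ∃ (K : ℕ) (t : ℕ → ℝ) (g : Ω → ℝ → Bool),
      0 < K ∧ t 0 = 0 ∧ t K = 1 ∧ (∀ k < K, t k < t (k + 1)) ∧
      Measurable (fun p : Ω × ℝ => g p.1 p.2) ∧
      (∀ k < K, ∀ ω ω' : Ω,
        (∀ s ∈ Ico (0 : ℝ) (t k), f (ω, s) = f (ω', s)) →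
        ∀ s ∈ Ico (t k) (t (k + 1)), g ω s = g ω' s) ∧
      ENNReal.ofReal (1 - δ) ≤
        (P.prod (volume.restrict (Ico (0 : ℝ) 1)))
          {p : Ω × ℝ | f p = g p.1 p.2} ∧
      (P.prod (volume.restrict (Ico (0 : ℝ) 1)))
          {p : Ω × ℝ | f p = g p.1 p.2} ≤ 1 := by
  have hlag : Tendsto (fun n : ℕ => 1 / ((n : ℝ) + 1)) atTop (𝓝 0) :=
    tendsto_one_div_add_atTop_nhds_zero_nat
  have hsymmDiff := (tendsto_prod_measure_preimage_sub_snd_symmDiff (measurableSet_trueSet hf)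
    (prod_volume_trueSet_ne_top P)).comp hlag
  obtain ⟨N, hN_symmDiff, hN_lag⟩ :=
    ((hsymmDiff.eventually_lt_const (ENNReal.ofReal_pos.mpr (half_pos hδ))).and
      (hlag.eventually_lt_const (half_pos hδ))).exists
  have hK : (0 : ℝ) < N + 1 := by positivity
  have : IsProbabilityMeasure (volume.restrict (Ico (0 : ℝ) 1)) := ⟨by simp⟩
  refine ⟨N + 1, fun k => k / (N + 1), delayedCopy f (1 / (N + 1)), N.succ_pos, by simp,
    by simp [hK.ne'], fun k _ => div_lt_div_of_pos_right (by push_cast; linarith) hK,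
    measurable_delayedCopy hf _,
    fun k _ ω ω' hpast s hs => delayedCopy_congr hpast (by simpa [add_div] using hs.2),
    ofReal_one_sub_le_of_measure_compl_le (measurableSet_eq_fun hf (measurable_delayedCopy hf _))
      hδ.le ?_, prob_le_one⟩
  calc _ ≤ _ := prod_measure_compl_setOf_eq_delayedCopy_le hf (by positivity)
    _ ≤ ENNReal.ofReal (δ / 2) + ENNReal.ofReal (δ / 2) := by
        rw [measure_univ, one_mul]
        exact add_le_add (ENNReal.ofReal_le_ofReal hN_lag.le) hN_symmDiff.le
    _ = ENNReal.ofReal δ := by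
        rw [← ENNReal.ofReal_add (by positivity) (by positivity), add_halves]
end

section
/- (Fixed-point play of mixed strategies with delay.) Let each player i have a mixed strategy μ^i with associated (random) increasing grid tending to ∞. Then on the product probability space there exists a P-a.s. unique (up to a.e. equality) pair of random controls ũ = (ũ^i) satisfying μ^i(ũ^{-i}) = ũ^i P-a.s., a.e. on ℝ₊, for every player i; its law defines the induced distribution over plays P_μ. -/
open MeasureTheory Set

/-- A non-anticipative strategy with delay. -/
def IsDelayStrategy {A B : Type*} (σ : (ℝ → A) → (ℝ → B)) : Prop :=
  ∃ t : ℕ → ℝ, t 0 = 0 ∧ StrictMono t ∧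
    Filter.Tendsto t Filter.atTop Filter.atTop ∧
    ∀ n : ℕ, ∀ u v : ℝ → A,
      (∀ᵐ s ∂(volume.restrict (Icc 0 (t n))), u s = v s) →
      (∀ᵐ s ∂(volume.restrict (Icc 0 (t (n + 1)))), σ u s = σ v s)

lemma ae_Icc_of_ae_Ioi {p : ℝ → Prop} (y : ℝ)
    (h : ∀ᵐ s ∂(volume.restrict (Ioi (0:ℝ))), p s) :
    ∀ᵐ s ∂(volume.restrict (Icc (0:ℝ) y)), p s := by
  rw [Filter.eventually_iff, mem_ae_iff, Measure.restrict_apply' measurableSet_Ioi] at h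
  rw [Filter.eventually_iff, mem_ae_iff, Measure.restrict_apply' measurableSet_Icc]
  refine measure_mono_null (fun x hx => ?_)
    (measure_union_null (measure_singleton (0:ℝ)) h :
      volume ({(0:ℝ)} ∪ ({x | p x}ᶜ ∩ Ioi 0)) = 0)
  rcases eq_or_lt_of_le hx.2.1 with h0 | h0
  · exact Or.inl (by simp [← h0])
  · exact Or.inr ⟨hx.1, h0⟩

lemma ae_Ioi_of_ae_Icc {p : ℝ → Prop} (d : ℕ → ℝ)
    (hd : Filter.Tendsto d Filter.atTop Filter.atTop)
    (h : ∀ n, ∀ᵐ s ∂(volume.restrict (Icc (0:ℝ) (d n))), p s) :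
    ∀ᵐ s ∂(volume.restrict (Ioi (0:ℝ))), p s := by
  rw [Filter.eventually_iff, mem_ae_iff, Measure.restrict_apply' measurableSet_Ioi]
  have h' : ∀ n, volume ({x | p x}ᶜ ∩ Icc 0 (d n)) = 0 := fun n => by
    have := h n
    rwa [Filter.eventually_iff, mem_ae_iff, Measure.restrict_apply' measurableSet_Icc] at this
  refine measure_mono_null (fun x hx => ?_) (measure_iUnion_null h')
  obtain ⟨n, hn⟩ := (hd.eventually_ge_atTop x).exists
  exact mem_iUnion.2 ⟨n, hx.1, le_of_lt hx.2, hn⟩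

lemma delay_step {A B : Type*} {σ : (ℝ → A) → (ℝ → B)} {s : ℕ → ℝ}
    (hs0 : s 0 = 0) (hmono : StrictMono s)
    (hdelay : ∀ n : ℕ, ∀ u v : ℝ → A,
      (∀ᵐ r ∂(volume.restrict (Icc 0 (s n))), u r = v r) →
      (∀ᵐ r ∂(volume.restrict (Icc 0 (s (n + 1)))), σ u r = σ v r))
    {x : ℝ} (hx : 0 ≤ x) (hex : ∃ n, x < s n) :
    ∃ y, x < y ∧ (∀ k, s k ≤ x → s (k + 1) ≤ y) ∧
      ∀ u v : ℝ → A, (∀ᵐ r ∂(volume.restrict (Icc 0 x)), u r = v r) →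
        ∀ᵐ r ∂(volume.restrict (Icc 0 y)), σ u r = σ v r := by
  refine ⟨s (Nat.find hex), Nat.find_spec hex, ?_, ?_⟩
  · intro k hk
    have hkn : k + 1 ≤ Nat.find hex := by
      by_contra hkn
      exact absurd (le_trans (hmono.monotone (by omega : Nat.find hex ≤ k)) hk)
        (not_le.2 (Nat.find_spec hex))
    exact hmono.monotone hkn
  · have hn1 : Nat.find hex ≠ 0 := by
      intro h0
      have := Nat.find_spec hex
      rw [h0, hs0] at this
      exact absurd this (not_lt.2 hx)
    obtain ⟨m, hm⟩ := Nat.exists_eq_succ_of_ne_zero hn1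
    intro u v huv
    have hsm : s m ≤ x := not_lt.1 (Nat.find_min hex (by omega))
    have := hdelay m u v
      (ae_restrict_of_ae_restrict_of_subset (Icc_subset_Icc_right hsm) huv)
    rw [hm]
    exact this

lemma delayFP {A₁ A₂ : Type*} [Nonempty A₁] [Nonempty A₂]
    (σ : (ℝ → A₂) → (ℝ → A₁)) (τ : (ℝ → A₁) → (ℝ → A₂))
    (hσ : IsDelayStrategy σ) (hτ : IsDelayStrategy τ) :
    ∃ p : (ℝ → A₁) × (ℝ → A₂),
      ((∀ᵐ r ∂(volume.restrict (Ioi (0:ℝ))), σ p.2 r = p.1 r) ∧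
       (∀ᵐ r ∂(volume.restrict (Ioi (0:ℝ))), τ p.1 r = p.2 r)) ∧
      ∀ q : (ℝ → A₁) × (ℝ → A₂),
        (∀ᵐ r ∂(volume.restrict (Ioi (0:ℝ))), σ q.2 r = q.1 r) →
        (∀ᵐ r ∂(volume.restrict (Ioi (0:ℝ))), τ q.1 r = q.2 r) →
        (∀ᵐ r ∂(volume.restrict (Ioi (0:ℝ))), q.1 r = p.1 r) ∧
        (∀ᵐ r ∂(volume.restrict (Ioi (0:ℝ))), q.2 r = p.2 r) := by
  classical
  obtain ⟨s, hs0, hsm, hst, hsd⟩ := hσ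
  obtain ⟨t, ht0, htm, htt, htd⟩ := hτ
  -- step functions
  have Hσ : ∀ x : ℝ, 0 ≤ x → ∃ y, x < y ∧ (∀ k, s k ≤ x → s (k + 1) ≤ y) ∧
      ∀ u v : ℝ → A₂, (∀ᵐ r ∂(volume.restrict (Icc 0 x)), u r = v r) →
        ∀ᵐ r ∂(volume.restrict (Icc 0 y)), σ u r = σ v r :=
    fun x hx => delay_step hs0 hsm hsd hx (hst.eventually_gt_atTop x).exists
  have Hτ : ∀ x : ℝ, 0 ≤ x → ∃ y, x < y ∧ (∀ k, t k ≤ x → t (k + 1) ≤ y) ∧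
      ∀ u v : ℝ → A₁, (∀ᵐ r ∂(volume.restrict (Icc 0 x)), u r = v r) →
        ∀ᵐ r ∂(volume.restrict (Icc 0 y)), τ u r = τ v r :=
    fun x hx => delay_step ht0 htm htd hx (htt.eventually_gt_atTop x).exists
  choose! gσ hgσ₁ hgσ₂ hgσ₃ using Hσ
  choose! gτ hgτ₁ hgτ₂ hgτ₃ using Hτ
  -- merged grid
  set c : ℕ → ℝ := fun k => Nat.rec (0:ℝ) (fun _ y => gτ (gσ y)) k with hcdef
  have hc0 : c 0 = 0 := rfl
  have hcsucc : ∀ k, c (k + 1) = gτ (gσ (c k)) := fun k => rfl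
  have hck : ∀ k, 0 ≤ c k ∧ s k ≤ c k := by
    intro k
    induction k with
    | zero => exact ⟨le_refl 0, le_of_eq hs0⟩
    | succ k ih =>
      have h1 : c k < gσ (c k) := hgσ₁ _ ih.1
      have h2 : 0 ≤ gσ (c k) := le_of_lt (lt_of_le_of_lt ih.1 h1)
      have h3 : gσ (c k) < c (k + 1) := by rw [hcsucc]; exact hgτ₁ _ h2
      constructor
      · exact le_of_lt (lt_of_le_of_lt h2 h3)
      · exact le_of_lt (lt_of_le_of_lt (hgσ₂ (c k) ih.1 k ih.2) h3)
  have hcpos : ∀ k, 0 ≤ c k := fun k => (hck k).1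
  have hclt : ∀ k, c k < c (k + 1) := by
    intro k
    have h1 : c k < gσ (c k) := hgσ₁ _ (hcpos k)
    have h2 : 0 ≤ gσ (c k) := le_of_lt (lt_of_le_of_lt (hcpos k) h1)
    rw [hcsucc]
    exact lt_trans h1 (hgτ₁ _ h2)
  have hcmono : Monotone c := (strictMono_nat_of_lt_succ hclt).monotone
  have hctend : Filter.Tendsto c Filter.atTop Filter.atTop :=
    Filter.tendsto_atTop_mono (fun k => (hck k).2) hst
  -- combined delay property for τ ∘ σ
  have hF : ∀ (k : ℕ) (u v : ℝ → A₂),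
      (∀ᵐ r ∂(volume.restrict (Icc 0 (c k))), u r = v r) →
      ∀ᵐ r ∂(volume.restrict (Icc 0 (c (k + 1)))), τ (σ u) r = τ (σ v) r := by
    intro k u v huv
    have h1 := hgσ₃ (c k) (hcpos k) u v huv
    have h2 : 0 ≤ gσ (c k) := le_of_lt (lt_of_le_of_lt (hcpos k) (hgσ₁ _ (hcpos k)))
    have := hgτ₃ (gσ (c k)) h2 (σ u) (σ v) h1
    rw [hcsucc]
    exact this
  -- Picard iteration
  set w : ℕ → ℝ → A₂ :=
    fun k => Nat.rec (fun _ => Classical.arbitrary A₂) (fun _ uk => τ (σ uk)) k with hwdef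
  have hwsucc : ∀ k, w (k + 1) = τ (σ (w k)) := fun k => rfl
  have hIcc0 : (volume.restrict (Icc (0:ℝ) 0)) = 0 := by
    rw [Measure.restrict_eq_zero]
    simp
  have hw : ∀ k, ∀ᵐ r ∂(volume.restrict (Icc 0 (c k))), w (k + 1) r = w k r := by
    intro k
    induction k with
    | zero =>
      rw [hc0, hIcc0]
      rw [ae_zero]; exact Filter.eventually_bot
    | succ k ih =>
      have := hF k (w (k + 1)) (w k) ih
      rw [hwsucc (k+1), hwsucc k]
      exact this
  -- the fixed point
  have hcK : ∀ r : ℝ, ∃ k, r ≤ c k := fun r => (hctend.eventually_ge_atTop r).exists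
  set u₂ : ℝ → A₂ := fun r => w (Nat.find (hcK r)) r with hu₂def
  have hu₂ : ∀ k, ∀ᵐ r ∂(volume.restrict (Icc 0 (c k))), u₂ r = w k r := by
    intro k
    rw [Filter.eventually_iff, mem_ae_iff, Measure.restrict_apply' measurableSet_Icc]
    have hbad : ∀ j, volume ({r | ¬ w (j + 1) r = w j r} ∩ Icc 0 (c j)) = 0 := fun j => by
      have := hw j
      rwa [Filter.eventually_iff, mem_ae_iff, Measure.restrict_apply' measurableSet_Icc]
        at this
    refine measure_mono_null (fun r hr => ?_) (measure_iUnion_null hbad)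
    obtain ⟨hr1, hr2⟩ := hr
    by_contra hN
    rw [mem_iUnion] at hN
    push_neg at hN
    apply hr1
    have hk₀ : Nat.find (hcK r) ≤ k := Nat.find_min' (hcK r) hr2.2
    have hrc : r ≤ c (Nat.find (hcK r)) := Nat.find_spec (hcK r)
    have key : ∀ j, Nat.find (hcK r) ≤ j → w j r = w (Nat.find (hcK r)) r := by
      intro j hj
      induction j, hj using Nat.le_induction with
      | base => rfl
      | succ j hj ih =>
        have hrj : r ∈ Icc 0 (c j) := ⟨hr2.1, le_trans hrc (hcmono hj)⟩
        have heq : w (j + 1) r = w j r := by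
          by_contra hne
          exact hN j ⟨hne, hrj⟩
        rw [heq, ih]
    show u₂ r = w k r
    rw [hu₂def]
    simp only
    rw [← key k hk₀]
  have hfixc : ∀ k, ∀ᵐ r ∂(volume.restrict (Icc 0 (c (k + 1)))), τ (σ u₂) r = u₂ r := by
    intro k
    have h1 := hF k u₂ (w k) (hu₂ k)
    have h2 := hu₂ (k + 1)
    rw [← hwsucc k] at h1
    filter_upwards [h1, h2] with r h1 h2
    rw [h1, ← h2]
  have hfix : ∀ᵐ r ∂(volume.restrict (Ioi (0:ℝ))), τ (σ u₂) r = u₂ r :=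
    ae_Ioi_of_ae_Icc (fun k => c (k + 1))
      (hctend.comp (Filter.tendsto_add_atTop_nat 1)) hfixc
  refine ⟨(σ u₂, u₂), ⟨Filter.Eventually.of_forall (fun r => rfl), hfix⟩, ?_⟩
  rintro ⟨v₁, v₂⟩ hq1 hq2
  simp only at hq1 hq2 ⊢
  -- v₂ is also a fixed point of τ ∘ σ
  have hFv : ∀ᵐ r ∂(volume.restrict (Ioi (0:ℝ))), τ (σ v₂) r = v₂ r := by
    have h1 : ∀ᵐ r ∂(volume.restrict (Ioi (0:ℝ))), τ (σ v₂) r = τ v₁ r := by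
      refine ae_Ioi_of_ae_Icc (fun m => t (m + 1))
        (htt.comp (Filter.tendsto_add_atTop_nat 1)) (fun m => ?_)
      exact htd m (σ v₂) v₁ (ae_Icc_of_ae_Ioi (t m) hq1)
    filter_upwards [h1, hq2] with r h1 h2
    rw [h1, h2]
  -- induction: v₂ = u₂ a.e. on [0, c k]
  have hvk : ∀ k, ∀ᵐ r ∂(volume.restrict (Icc 0 (c k))), v₂ r = u₂ r := by
    intro k
    induction k with
    | zero =>
      rw [hc0, hIcc0]
      rw [ae_zero]; exact Filter.eventually_bot
    | succ k ih =>
      have h1 := hF k v₂ u₂ ih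
      have h2 := ae_Icc_of_ae_Ioi (c (k + 1)) hFv
      have h3 := hfixc k
      filter_upwards [h1, h2, h3] with r h1 h2 h3
      rw [← h2, h1, h3]
  have hv₂ : ∀ᵐ r ∂(volume.restrict (Ioi (0:ℝ))), v₂ r = u₂ r :=
    ae_Ioi_of_ae_Icc c hctend hvk
  refine ⟨?_, hv₂⟩
  have hσv : ∀ᵐ r ∂(volume.restrict (Ioi (0:ℝ))), σ v₂ r = σ u₂ r := by
    refine ae_Ioi_of_ae_Icc (fun n => s (n + 1))
      (hst.comp (Filter.tendsto_add_atTop_nat 1)) (fun n => ?_)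
    exact hsd n v₂ u₂ (ae_Icc_of_ae_Ioi (s n) hv₂)
  filter_upwards [hq1, hσv] with r h1 h2
  rw [← h1, h2]

/-- Fixed-point play of mixed strategies with delay: given mixed strategies
`μ¹, μ²` of the two players (probability spaces `Ω¹, Ω²` together with maps
that are a.s. pure non-anticipative strategies with delay), on the product
probability space there exists a `P`-a.s. unique (up to a.e. equality) pair of
random controls `(ũ¹, ũ²)` satisfying `μ¹(ũ²) = ũ¹` and `μ²(ũ¹) = ũ²`
`P`-a.s., a.e. on `ℝ₊`; its law defines the induced distribution over plays. -/
theorem mixed_strategies_fixed_point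
    (A₁ A₂ : Type*) [Fintype A₁] [Fintype A₂] [Nonempty A₁] [Nonempty A₂]
    (Ω₁ Ω₂ : Type*) [MeasurableSpace Ω₁] [MeasurableSpace Ω₂]
    (P₁ : Measure Ω₁) [IsProbabilityMeasure P₁]
    (P₂ : Measure Ω₂) [IsProbabilityMeasure P₂]
    (μ₁ : Ω₁ → (ℝ → A₂) → (ℝ → A₁)) (μ₂ : Ω₂ → (ℝ → A₁) → (ℝ → A₂))
    (hμ₁ : ∀ᵐ ω₁ ∂P₁, IsDelayStrategy (μ₁ ω₁))
    (hμ₂ : ∀ᵐ ω₂ ∂P₂, IsDelayStrategy (μ₂ ω₂)) :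
    ∃ (u₁ : Ω₁ × Ω₂ → ℝ → A₁) (u₂ : Ω₁ × Ω₂ → ℝ → A₂),
      (∀ᵐ ω ∂(P₁.prod P₂),
        (∀ᵐ t ∂(volume.restrict (Ioi (0 : ℝ))), μ₁ ω.1 (u₂ ω) t = u₁ ω t) ∧
        (∀ᵐ t ∂(volume.restrict (Ioi (0 : ℝ))), μ₂ ω.2 (u₁ ω) t = u₂ ω t)) ∧
      ∀ (v₁ : Ω₁ × Ω₂ → ℝ → A₁) (v₂ : Ω₁ × Ω₂ → ℝ → A₂),
        (∀ᵐ ω ∂(P₁.prod P₂),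
          (∀ᵐ t ∂(volume.restrict (Ioi (0 : ℝ))), μ₁ ω.1 (v₂ ω) t = v₁ ω t) ∧
          (∀ᵐ t ∂(volume.restrict (Ioi (0 : ℝ))), μ₂ ω.2 (v₁ ω) t = v₂ ω t)) →
        ∀ᵐ ω ∂(P₁.prod P₂),
          (∀ᵐ t ∂(volume.restrict (Ioi (0 : ℝ))), v₁ ω t = u₁ ω t) ∧
          (∀ᵐ t ∂(volume.restrict (Ioi (0 : ℝ))), v₂ ω t = u₂ ω t) := by
  classical
  -- the good event holds a.e. on the product space
  have h1 : ∀ᵐ ω ∂(P₁.prod P₂), IsDelayStrategy (μ₁ ω.1) := by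
    rw [ae_iff] at hμ₁ ⊢
    obtain ⟨N, hNsub, hNm, hN0⟩ := exists_measurable_superset_of_null hμ₁
    refine measure_mono_null (fun ω hω => ?_)
      (?_ : (P₁.prod P₂) (N ×ˢ (univ : Set Ω₂)) = 0)
    · exact ⟨hNsub hω, mem_univ _⟩
    · rw [Measure.prod_prod, hN0, zero_mul]
  have h2 : ∀ᵐ ω ∂(P₁.prod P₂), IsDelayStrategy (μ₂ ω.2) := by
    rw [ae_iff] at hμ₂ ⊢
    obtain ⟨N, hNsub, hNm, hN0⟩ := exists_measurable_superset_of_null hμ₂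
    refine measure_mono_null (fun ω hω => ?_)
      (?_ : (P₁.prod P₂) ((univ : Set Ω₁) ×ˢ N) = 0)
    · exact ⟨mem_univ _, hNsub hω⟩
    · rw [Measure.prod_prod, hN0, mul_zero]
  have hae := h1.and h2
  -- choose, for each good ω, the fixed point pair
  have key : ∀ ω : Ω₁ × Ω₂, ∃ p : (ℝ → A₁) × (ℝ → A₂),
      (IsDelayStrategy (μ₁ ω.1) ∧ IsDelayStrategy (μ₂ ω.2)) →
      (((∀ᵐ r ∂(volume.restrict (Ioi (0:ℝ))), μ₁ ω.1 p.2 r = p.1 r) ∧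
        (∀ᵐ r ∂(volume.restrict (Ioi (0:ℝ))), μ₂ ω.2 p.1 r = p.2 r)) ∧
       ∀ q : (ℝ → A₁) × (ℝ → A₂),
         (∀ᵐ r ∂(volume.restrict (Ioi (0:ℝ))), μ₁ ω.1 q.2 r = q.1 r) →
         (∀ᵐ r ∂(volume.restrict (Ioi (0:ℝ))), μ₂ ω.2 q.1 r = q.2 r) →
         (∀ᵐ r ∂(volume.restrict (Ioi (0:ℝ))), q.1 r = p.1 r) ∧
         (∀ᵐ r ∂(volume.restrict (Ioi (0:ℝ))), q.2 r = p.2 r)) := by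
    intro ω
    by_cases h : IsDelayStrategy (μ₁ ω.1) ∧ IsDelayStrategy (μ₂ ω.2)
    · obtain ⟨p, hp⟩ := delayFP (μ₁ ω.1) (μ₂ ω.2) h.1 h.2
      exact ⟨p, fun _ => hp⟩
    · exact ⟨(fun _ => Classical.arbitrary A₁, fun _ => Classical.arbitrary A₂),
        fun h' => absurd h' h⟩
  choose sol hsol using key
  refine ⟨fun ω => (sol ω).1, fun ω => (sol ω).2, ?_, ?_⟩
  · filter_upwards [hae] with ω h
    exact (hsol ω h).1
  · intro v₁ v₂ hv
    filter_upwards [hae, hv] with ω h hvω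
    exact (hsol ω h).2 (v₁ ω, v₂ ω) hvω.1 hvω.2
end
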